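/- Let G be a group in which every nontrivial conjugacy class {c⁻¹ac : c ∈ G} (a ≠ 1) is infinite. Let A be a bounded operator on c₀(G,K) whose matrix satisfies α_{a,b} = η_{a⁻¹b} = θ_{ab⁻¹} for some functions η, θ : G → K (i.e., A commutes with both all U_g and all V_g). Then A is a scalar multiple of the identity. -/

import Mathlib

set_option linter.unusedSectionVars false

open ZeroAtInfty Filter

noncomputable section

variable {J : Type*} [TopologicalSpace J] [DiscreteTopology J]
variable {K : Type*} [NontriviallyNormedField K]

/-- The standard basis vector `δ_j` in `c₀(J, K)` (the indicator function of `j`). -/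
def delta (j : J) : C₀(J, K) :=
  letI := Classical.decEq J
  ⟨⟨fun i => if i = j then (1 : K) else 0, continuous_of_discreteTopology⟩, by
    refine Tendsto.congr' ?_ tendsto_const_nhds
    rw [cocompact_eq_cofinite]
    filter_upwards [(Set.finite_singleton j).compl_mem_cofinite] with i hi
    simp only [Set.mem_compl_iff, Set.mem_singleton_iff] at hi
    simp [hi]⟩

lemma c0_norm_apply_le (x : C₀(J, K)) (i : J) : ‖x i‖ ≤ ‖x‖ := by
  rw [← ZeroAtInftyContinuousMap.norm_toBCF_eq_norm]
  exact x.toBCF.norm_coe_le_norm i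

lemma c0_norm_le_of_forall {x : C₀(J, K)} {C : ℝ} (hC : 0 ≤ C) (h : ∀ i, ‖x i‖ ≤ C) :
    ‖x‖ ≤ C := by
  rw [← ZeroAtInftyContinuousMap.norm_toBCF_eq_norm]
  exact (BoundedContinuousFunction.norm_le hC).2 h

/-- Precomposition with a bijection of the (discrete) index set, as a continuous
linear operator on `c₀(J, K)`. -/
def precompCLM (σ : J ≃ J) : C₀(J, K) →L[K] C₀(J, K) :=
  LinearMap.mkContinuous
    (ZeroAtInftyContinuousMap.compLinearMap
      (⟨⟨σ, continuous_of_discreteTopology⟩, by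
          simpa [cocompact_eq_cofinite] using σ.injective.tendsto_cofinite⟩ : CocompactMap J J))
    1
    (fun f => by
      rw [one_mul]
      exact c0_norm_le_of_forall (norm_nonneg f) fun i => c0_norm_apply_le f (σ i))

@[simp] lemma precompCLM_apply (σ : J ≃ J) (f : C₀(J, K)) (i : J) :
    precompCLM σ f i = f (σ i) := rfl

variable {G : Type*} [Group G] [TopologicalSpace G] [DiscreteTopology G]

/-- The right regular representation: `(U_g x)_a = x_{a g}`. -/
def U (g : G) : C₀(G, K) →L[K] C₀(G, K) := precompCLM (Equiv.mulRight g)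

/-- The left regular representation: `(V_g x)_a = x_{g⁻¹ a}`. -/
def V (g : G) : C₀(G, K) →L[K] C₀(G, K) := precompCLM (Equiv.mulLeft g⁻¹)

/-- The flip operator `(W x)_a = x_{a⁻¹}`. -/
def Wop : C₀(G, K) →L[K] C₀(G, K) := precompCLM (Equiv.inv G)

end

/-!
The first column of `A` is `θ`, so `θ` tends to `0` along the cofinite filter. Comparing the two
descriptions of the matrix shows `θ (c⁻¹ g⁻¹ c) = η g` for all `c`, i.e. `θ` is constant on the
conjugacy class of `g⁻¹`; for `g ≠ 1` that class is infinite, so `η g = 0`. Hence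
`A δ_b = η 1 • δ_b` for every `b`, and the `δ_b` span a dense subspace of `c₀(G, K)`.
-/

open scoped Topology

section Delta

variable {J : Type*} [TopologicalSpace J] [DiscreteTopology J]
variable {K : Type*} [NontriviallyNormedField K]

lemma delta_apply [DecidableEq J] (j i : J) :
    (delta j : C₀(J, K)) i = if i = j then 1 else 0 := by
  simp only [delta, ZeroAtInftyContinuousMap.coe_mk]
  congr

lemma sum_smul_delta_apply [DecidableEq J] (S : Finset J) (c : J → K) (i : J) :
    (∑ j ∈ S, c j • delta j : C₀(J, K)) i = if i ∈ S then c i else 0 := by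
  have := map_sum (AddMonoidHom.mk' (fun f : C₀(J, K) => f i) fun _ _ => rfl)
    (fun j => c j • delta j) S
  simp only [AddMonoidHom.mk'_apply] at this
  simp [this, delta_apply, Finset.sum_ite_eq]

lemma ZeroAtInftyContinuousMap.tendsto_cofinite_zero (x : C₀(J, K)) :
    Tendsto x cofinite (𝓝 0) := by
  simpa [cocompact_eq_cofinite] using x.zero_at_infty'

lemma dense_span_range_delta :
    Dense (Submodule.span K (Set.range (delta : J → C₀(J, K))) : Set C₀(J, K)) := by
  classical
  intro x
  refine Metric.mem_closure_iff.2 fun ε hε => ?_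
  have hfin : {i | ¬ ‖x i‖ < ε / 2}.Finite := eventually_cofinite.1 <|
    (NormedAddGroup.tendsto_nhds_zero.1 x.tendsto_cofinite_zero) _ (half_pos hε)
  set S := hfin.toFinset
  refine ⟨(∑ j ∈ S, x j • delta j : C₀(J, K)), Submodule.sum_mem _ fun j _ =>
    Submodule.smul_mem _ (x j) (Submodule.subset_span ⟨j, rfl⟩), ?_⟩
  rw [dist_eq_norm]
  refine (c0_norm_le_of_forall (half_pos hε).le fun i => ?_).trans_lt (half_lt_self hε)
  rw [ZeroAtInftyContinuousMap.sub_apply, sum_smul_delta_apply]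
  split_ifs with hi
  · simpa using (half_pos hε).le
  · simpa using (not_not.1 (mt hfin.mem_toFinset.2 hi)).le

lemma ContinuousLinearMap.ext_delta {E : Type*} [NormedAddCommGroup E] [NormedSpace K E]
    {f g : C₀(J, K) →L[K] E} (h : ∀ j, f (delta j) = g (delta j)) : f = g :=
  ContinuousLinearMap.ext_on dense_span_range_delta (by rintro _ ⟨j, rfl⟩; exact h j)

end Delta

lemma eq_of_tendsto_cofinite_of_infinite {α E : Type*} [TopologicalSpace E] [T1Space E]
    {f : α → E} {a c : E} (hf : Tendsto f cofinite (𝓝 a)) {s : Set α} (hs : s.Infinite)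
    (hc : ∀ x ∈ s, f x = c) : c = a := by
  by_contra hne
  have hfin : {x | f x = c}.Finite := by
    simpa using eventually_cofinite.1 (hf.eventually (isOpen_ne.mem_nhds (Ne.symm hne)))
  exact hs (hfin.subset hc)

/-- If every nontrivial conjugacy class of `G` is infinite (ICC group),
then a bounded operator on `c₀(G, K)` commuting with both regular representations
(equivalently, whose matrix satisfies `α_{a,b} = η_{a⁻¹b} = θ_{ab⁻¹}`) is a scalar
multiple of the identity. -/
theorem icc_implies_factor
    {K : Type*} [NontriviallyNormedField K]
    {G : Type*} [Group G] [TopologicalSpace G] [DiscreteTopology G]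
    (hicc : ∀ a : G, a ≠ 1 → {x : G | ∃ c : G, x = c⁻¹ * a * c}.Infinite)
    (A : C₀(G, K) →L[K] C₀(G, K)) (η θ : G → K)
    (hη : ∀ a b : G, A (delta b) a = η (a⁻¹ * b))
    (hθ : ∀ a b : G, A (delta b) a = θ (a * b⁻¹)) :
    ∃ c : K, A = c • ContinuousLinearMap.id K (C₀(G, K)) := by
  classical
  have hθ_tendsto : Tendsto θ cofinite (𝓝 0) :=
    (A (delta 1)).tendsto_cofinite_zero.congr fun t => by simpa using hθ t 1
  have hθ_conj (g c : G) : θ (c⁻¹ * g⁻¹ * c) = η g := by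
    simpa [mul_assoc] using (hθ c⁻¹ (c⁻¹ * g)).symm.trans (hη c⁻¹ (c⁻¹ * g))
  have hη_ne_one (g : G) (hg : g ≠ 1) : η g = 0 :=
    eq_of_tendsto_cofinite_of_infinite hθ_tendsto (hicc g⁻¹ (inv_ne_one.2 hg))
      (by rintro _ ⟨c, rfl⟩; exact hθ_conj g c)
  refine ⟨η 1, ContinuousLinearMap.ext_delta fun b => ?_⟩
  ext a
  by_cases hab : a = b
  · simp [hab, hη, delta_apply]
  · simp [hη, delta_apply, hab, hη_ne_one _ (mt inv_mul_eq_one.1 hab)]
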